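/- Let (V, σ) be a pre-braided vector space (σ : V ⊗ V → V ⊗ V satisfying the Yang–Baxter equation) and let ε : V → k be a braided character, i.e. (ε ⊗ ε) ∘ σ = ε ⊗ ε. Then the maps d_n : V^⊗n → V^⊗(n−1) defined by d_n = Σ_{i=1}^{n} (−1)^{i−1} ε₁ ∘ T^σ_{p_{i,n}}, where p_{i,n} is the permutation moving the i-th strand to the leftmost position and T^σ is the corresponding braid-lift acting via σ, satisfy d_{n−1} ∘ d_n = 0. -/

import Mathlib

open TensorProduct

universe u
variable {R V : Type u} [CommRing R] [AddCommGroup V] [Module R V]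

/-- `σ ⊗ id` as an endomorphism of `V ⊗ (V ⊗ V)`. -/
noncomputable def sigma1 (σ : V ⊗[R] V →ₗ[R] V ⊗[R] V) :
    V ⊗[R] (V ⊗[R] V) →ₗ[R] V ⊗[R] (V ⊗[R] V) :=
  (TensorProduct.assoc R V V V).toLinearMap ∘ₗ (LinearMap.rTensor V σ) ∘ₗ
    (TensorProduct.assoc R V V V).symm.toLinearMap

/-- `id ⊗ σ` as an endomorphism of `V ⊗ (V ⊗ V)`. -/
noncomputable def sigma2 (σ : V ⊗[R] V →ₗ[R] V ⊗[R] V) :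
    V ⊗[R] (V ⊗[R] V) →ₗ[R] V ⊗[R] (V ⊗[R] V) :=
  LinearMap.lTensor V σ

/-- The Yang–Baxter equation for `σ : V ⊗ V → V ⊗ V`. -/
def YangBaxter (σ : V ⊗[R] V →ₗ[R] V ⊗[R] V) : Prop :=
  sigma1 σ ∘ₗ sigma2 σ ∘ₗ sigma1 σ = sigma2 σ ∘ₗ sigma1 σ ∘ₗ sigma2 σ

variable (R V) in
/-- The iterated tensor power `V^{⊗n}` (left-nested: `TP 0 = R`, `TP (n+1) = V ⊗ TP n`),
bundled as an object of `ModuleCat R` so that the recursion carries its instances. -/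
noncomputable def TPb : ℕ → ModuleCat.{u} R
  | 0 => ModuleCat.of R R
  | n + 1 => ModuleCat.of R (V ⊗[R] (TPb n))

variable (R V) in
/-- The iterated tensor power `V^{⊗n}` as a type. -/
noncomputable abbrev TP (n : ℕ) : Type u := (TPb R V n : Type u)

/-- The lift `σᵢ = id^{⊗(i−1)} ⊗ σ ⊗ id^{⊗(n−i−1)}` of `σ` to `V^{⊗n}`, acting on the
tensor factors `i` and `i+1` (1-indexed); it is the identity for out-of-range `i`. -/
noncomputable def sig (σ : V ⊗[R] V →ₗ[R] V ⊗[R] V) :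
    (n : ℕ) → (i : ℕ) → TP R V n →ₗ[R] TP R V n
  | 0, _ => LinearMap.id
  | 1, _ => LinearMap.id
  | n+2, 0 => LinearMap.id
  | n+2, 1 =>
      (TensorProduct.assoc R V V (TP R V n)).toLinearMap ∘ₗ
        (LinearMap.rTensor (TP R V n) σ) ∘ₗ
        (TensorProduct.assoc R V V (TP R V n)).symm.toLinearMap
  | n+2, i+2 => LinearMap.lTensor V (sig σ (n+1) (i+1))

/-- The braid lift `T^σ_{p_{i,n}} = σ₁ ∘ σ₂ ∘ ⋯ ∘ σ_{i−1}` of the permutation `p_{i,n}`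
moving the `i`-th strand to the leftmost position. -/
noncomputable def slide (σ : V ⊗[R] V →ₗ[R] V ⊗[R] V) (n : ℕ) :
    (i : ℕ) → TP R V n →ₗ[R] TP R V n
  | 0 => LinearMap.id
  | 1 => LinearMap.id
  | i+2 => slide σ n (i+1) ∘ₗ sig σ n (i+1)

/-- `ε₁ = ε ⊗ id^{⊗n}` : applying `ε` to the first tensor factor of `V^{⊗(n+1)}`. -/
noncomputable def eps1 (ε : V →ₗ[R] R) (n : ℕ) : TP R V (n+1) →ₗ[R] TP R V n :=
  (TensorProduct.lid R (TP R V n)).toLinearMap ∘ₗ LinearMap.rTensor (TP R V n) ε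

/-- The face map `d_{n+1;i} = ε₁ ∘ T^σ_{p_{i,n+1}} : V^{⊗(n+1)} → V^{⊗n}`. -/
noncomputable def face (σ : V ⊗[R] V →ₗ[R] V ⊗[R] V) (ε : V →ₗ[R] R) (n : ℕ) (i : ℕ) :
    TP R V (n+1) →ₗ[R] TP R V n :=
  eps1 ε n ∘ₗ slide σ (n+1) i

/-- The braided differential `d_{n+1} = Σ_{i=1}^{n+1} (−1)^{i−1} ε₁ ∘ T^σ_{p_{i,n+1}}`. -/
noncomputable def dbr (σ : V ⊗[R] V →ₗ[R] V ⊗[R] V) (ε : V →ₗ[R] R) (n : ℕ) :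
    TP R V (n+1) →ₗ[R] TP R V n :=
  ∑ i ∈ Finset.range (n+1), ((-1 : R)^i) • face σ ε n (i+1)

/-! The face maps `dᵢ = ε₁ ∘ T^σ_{p_i}` satisfy the semi-simplicial identities
`dᵢ ∘ d_{j+1} = d_j ∘ dᵢ` for `i ≤ j`, and then `d ∘ d = 0` is the usual cancellation of the
alternating double sum. For the identity, `T^σ_{p_i} ∘ ε₁ = ε₁ ∘ (id ⊗ T^σ_{p_i})`; by the braid
relations, `id ⊗ T^σ_{p_i} = σ₂ ⋯ σ_i` moves past `T^σ_{p_{j+1}} = σ₁ ⋯ σ_j`, becoming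
`T^σ_{p_i}`; finally `T^σ_{p_{j+1}} = σ₁ ∘ (id ⊗ T^σ_{p_j})` and `ε₁ ∘ ε₁` absorbs `σ₁` because
`ε` is a braided character. -/

open LinearMap

section Combinatorics
variable {S M : Type*} [Ring S] [AddCommGroup M] [Module S M]

theorem sum_range_sum_range_neg_one_pow_smul_eq_zero (n : ℕ) (G : ℕ → ℕ → M)
    (hG : ∀ i j, i ≤ j → j ≤ n → G i (j + 1) = G j i) :
    ∑ i ∈ Finset.range (n + 1), ∑ j ∈ Finset.range (n + 2), (-1 : S) ^ (i + j) • G i j = 0 := by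
  set lower := ∑ i ∈ Finset.range (n + 1), ∑ j ∈ Finset.range (i + 1), (-1 : S) ^ (i + j) • G i j
  have upper : ∀ i ∈ Finset.range (n + 1),
      ∑ j ∈ Finset.Ico (i + 1) (n + 2), (-1 : S) ^ (i + j) • G i j
        = -∑ j ∈ Finset.Ico i (n + 1), (-1 : S) ^ (i + j) • G j i := by
    intro i hi
    rw [← Finset.sum_Ico_add', ← Finset.sum_neg_distrib]
    refine Finset.sum_congr rfl fun j hj => ?_
    obtain ⟨hij, hjn⟩ := Finset.mem_Ico.mp hj
    rw [← add_assoc, pow_succ, mul_neg_one, neg_smul, hG i j hij (by omega)]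
  calc _ = lower + ∑ i ∈ Finset.range (n + 1),
        ∑ j ∈ Finset.Ico (i + 1) (n + 2), (-1 : S) ^ (i + j) • G i j := by
        rw [← Finset.sum_add_distrib]
        refine Finset.sum_congr rfl fun i hi => ?_
        rw [Finset.sum_range_add_sum_Ico _ (by simp at hi; omega)]
    _ = lower - lower := by
        rw [Finset.sum_congr rfl upper, Finset.sum_neg_distrib, sub_eq_add_neg, Finset.range_eq_Ico,
          Finset.sum_Ico_Ico_comm]
        simp only [← Finset.range_eq_Ico, add_comm]
        rfl
    _ = 0 := sub_self lower

end Combinatorics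

theorem alternating_sum_comp_alternating_sum_eq_zero {M N P : Type*}
    [AddCommGroup M] [Module R M] [AddCommGroup N] [Module R N] [AddCommGroup P] [Module R P]
    (n : ℕ) (f : ℕ → N →ₗ[R] P) (g : ℕ → M →ₗ[R] N)
    (hfg : ∀ i j, i ≤ j → j ≤ n → f i ∘ₗ g (j + 1) = f j ∘ₗ g i) :
    (∑ i ∈ Finset.range (n + 1), (-1 : R) ^ i • f i) ∘ₗ
      ∑ j ∈ Finset.range (n + 2), (-1 : R) ^ j • g j = 0 := by
  rw [← sum_range_sum_range_neg_one_pow_smul_eq_zero (S := R) n (fun i j => f i ∘ₗ g j) hfg]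
  ext x
  simp [LinearMap.sum_apply, Finset.smul_sum, smul_smul, pow_add]

section TensorAlgebra
variable {W W' : Type*} [AddCommGroup W] [Module R W] [AddCommGroup W'] [Module R W']

noncomputable def epsLeft (ε : V →ₗ[R] R) (W : Type*) [AddCommGroup W] [Module R W] :
    V ⊗[R] W →ₗ[R] W :=
  (TensorProduct.lid R W).toLinearMap ∘ₗ rTensor W ε

theorem epsLeft_comp_lTensor (ε : V →ₗ[R] R) (g : W →ₗ[R] W') :
    epsLeft ε W' ∘ₗ lTensor V g = g ∘ₗ epsLeft ε W := by
  ext x y; simp [epsLeft]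

theorem epsLeft_comp_epsLeft_comp_conj_rTensor {σ : V ⊗[R] V →ₗ[R] V ⊗[R] V} {ε : V →ₗ[R] R}
    (hε : ((TensorProduct.lid R R).toLinearMap ∘ₗ TensorProduct.map ε ε) ∘ₗ σ =
      (TensorProduct.lid R R).toLinearMap ∘ₗ TensorProduct.map ε ε) :
    (epsLeft ε W ∘ₗ epsLeft ε (V ⊗[R] W)) ∘ₗ (TensorProduct.assoc R V V W).conj (rTensor W σ) =
      epsLeft ε W ∘ₗ epsLeft ε (V ⊗[R] W) := by
  set φ := (TensorProduct.lid R R).toLinearMap ∘ₗ TensorProduct.map ε ε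
  have h : (epsLeft ε W ∘ₗ epsLeft ε (V ⊗[R] W)) ∘ₗ (TensorProduct.assoc R V V W).toLinearMap =
      (TensorProduct.lid R W).toLinearMap ∘ₗ rTensor W φ := by
    ext x y w; simp [epsLeft, φ, smul_smul]
  rw [LinearEquiv.conj_apply, ← comp_assoc, LinearEquiv.comp_toLinearMap_symm_eq, ← comp_assoc, h,
    comp_assoc, ← rTensor_comp, hε]

theorem conj_rTensor_comp_lTensor_lTensor_comm (σ : V ⊗[R] V →ₗ[R] V ⊗[R] V) (h : W →ₗ[R] W) :
    (TensorProduct.assoc R V V W).conj (rTensor W σ) ∘ₗ lTensor V (lTensor V h) =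
      lTensor V (lTensor V h) ∘ₗ (TensorProduct.assoc R V V W).conj (rTensor W σ) := by
  have hh : lTensor V (lTensor V h) =
      (TensorProduct.assoc R V V W).conj (lTensor (V ⊗[R] V) h) := by
    ext x y w; simp
  rw [hh, ← LinearEquiv.conj_comp, ← LinearEquiv.conj_comp, rTensor_comp_lTensor,
    lTensor_comp_rTensor]

theorem conj_rTensor_braid {σ : V ⊗[R] V →ₗ[R] V ⊗[R] V} (hσ : YangBaxter σ) :
    (TensorProduct.assoc R V V (V ⊗[R] W)).conj (rTensor (V ⊗[R] W) σ) ∘ₗ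
        lTensor V ((TensorProduct.assoc R V V W).conj (rTensor W σ)) ∘ₗ
        (TensorProduct.assoc R V V (V ⊗[R] W)).conj (rTensor (V ⊗[R] W) σ) =
      lTensor V ((TensorProduct.assoc R V V W).conj (rTensor W σ)) ∘ₗ
        (TensorProduct.assoc R V V (V ⊗[R] W)).conj (rTensor (V ⊗[R] W) σ) ∘ₗ
        lTensor V ((TensorProduct.assoc R V V W).conj (rTensor W σ)) := by
  -- Reassociating the first three factors turns both maps into `sigma1 σ ⊗ id_W` and
  -- `sigma2 σ ⊗ id_W`, so the relation is the Yang–Baxter equation tensored with `W`.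
  let Ψ : (V ⊗[R] (V ⊗[R] V)) ⊗[R] W ≃ₗ[R] V ⊗[R] (V ⊗[R] (V ⊗[R] W)) :=
    (TensorProduct.assoc R V (V ⊗[R] V) W).trans
      (TensorProduct.congr (LinearEquiv.refl R V) (TensorProduct.assoc R V V W))
  have h₁ : (TensorProduct.assoc R V V (V ⊗[R] W)).conj (rTensor (V ⊗[R] W) σ) =
      Ψ.conj (rTensor W (sigma1 σ)) := by
    ext x y z w
    simp [Ψ, sigma1]
    induction σ (x ⊗ₜ[R] y) using TensorProduct.induction_on with
    | zero => simp
    | tmul a b => simp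
    | add u v hu hv => simp [add_tmul, hu, hv]
  have h₂ : lTensor V ((TensorProduct.assoc R V V W).conj (rTensor W σ)) =
      Ψ.conj (rTensor W (sigma2 σ)) := by
    ext x y z w
    simp [Ψ, sigma2]
  simp only [h₁, h₂, ← LinearEquiv.conj_comp, ← rTensor_comp]
  exact congrArg (fun f => Ψ.conj (rTensor W f)) hσ

end TensorAlgebra

/-- `id_V ⊗ f`, typed on tensor powers rather than on `V ⊗ TP R V n`, so that composition lemmas
rewrite syntactically against `sig` and `slide`. -/
noncomputable def idTensor {m n : ℕ} (f : TP R V n →ₗ[R] TP R V m) :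
    TP R V (n + 1) →ₗ[R] TP R V (m + 1) :=
  lTensor V f

section IdTensor
variable {σ : V ⊗[R] V →ₗ[R] V ⊗[R] V} {l m n : ℕ}

theorem idTensor_id : idTensor (LinearMap.id : TP R V n →ₗ[R] TP R V n) = LinearMap.id :=
  lTensor_id V _

theorem idTensor_comp (f : TP R V m →ₗ[R] TP R V l) (g : TP R V n →ₗ[R] TP R V m) :
    idTensor (f ∘ₗ g) = idTensor f ∘ₗ idTensor g :=
  lTensor_comp V f g

theorem idTensor_sig (n i : ℕ) : idTensor (sig σ n (i + 1)) = sig σ (n + 1) (i + 2) := by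
  cases n with
  | zero => exact idTensor_id
  | succ n => rfl

theorem eps1_comp_idTensor (ε : V →ₗ[R] R) (g : TP R V n →ₗ[R] TP R V m) :
    eps1 ε m ∘ₗ idTensor g = g ∘ₗ eps1 ε n :=
  epsLeft_comp_lTensor ε g

end IdTensor

section Sig
variable {σ : V ⊗[R] V →ₗ[R] V ⊗[R] V}

theorem sig_zero (n : ℕ) : sig σ n 0 = LinearMap.id := by
  match n with
  | 0 | 1 | _ + 2 => rfl

theorem sig_comp_sig_comm {k m : ℕ} (h : k + 2 ≤ m) (n : ℕ) :
    sig σ n k ∘ₗ sig σ n m = sig σ n m ∘ₗ sig σ n k := by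
  match k, n with
  | 0, n => rw [sig_zero, id_comp, comp_id]
  | _ + 1, 0 | _ + 1, 1 => rfl
  | 1, n + 2 =>
    obtain ⟨m, rfl⟩ : ∃ m', m = m' + 3 := ⟨m - 3, by omega⟩
    rw [← idTensor_sig, ← idTensor_sig]
    exact conj_rTensor_comp_lTensor_lTensor_comm σ _
  | k + 2, n + 2 =>
    obtain ⟨m, rfl⟩ : ∃ m', m = m' + 2 := ⟨m - 2, by omega⟩
    rw [← idTensor_sig, ← idTensor_sig, ← idTensor_comp, ← idTensor_comp,
      sig_comp_sig_comm (k := k + 1) (by omega)]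

-- For `n = k + 2` the middle factor `sig σ n (k + 2)` is the identity and the relation fails.
theorem sig_braid (hσ : YangBaxter σ) {n k : ℕ} (h : k + 3 ≤ n) :
    sig σ n (k + 1) ∘ₗ sig σ n (k + 2) ∘ₗ sig σ n (k + 1) =
      sig σ n (k + 2) ∘ₗ sig σ n (k + 1) ∘ₗ sig σ n (k + 2) := by
  match n, k, h with
  | n + 3, 0, _ => exact conj_rTensor_braid (W := TP R V n) hσ
  | n + 1, k + 1, h =>
    rw [← idTensor_sig, ← idTensor_sig, ← idTensor_comp, ← idTensor_comp, ← idTensor_comp,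
      ← idTensor_comp, sig_braid hσ (by omega : k + 3 ≤ n)]

end Sig

section Slide
variable {σ : V ⊗[R] V →ₗ[R] V ⊗[R] V}

theorem slide_succ {n i : ℕ} (hi : 1 ≤ i) : slide σ n (i + 1) = slide σ n i ∘ₗ sig σ n i := by
  obtain ⟨i, rfl⟩ : ∃ i', i = i' + 1 := ⟨i - 1, by omega⟩
  rfl

theorem sig_comp_slide_comm {n k m : ℕ} (h : k < m) :
    sig σ n m ∘ₗ slide σ n k = slide σ n k ∘ₗ sig σ n m := by
  match k with
  | 0 | 1 => rfl
  | k + 2 =>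
    rw [slide_succ (by omega), ← comp_assoc, sig_comp_slide_comm (by omega), comp_assoc,
      ← sig_comp_sig_comm (by omega), comp_assoc]

theorem sig_comp_slide (hσ : YangBaxter σ) {n k j : ℕ} (hkj : k + 3 ≤ j) (hjn : j ≤ n) :
    sig σ n (k + 2) ∘ₗ slide σ n j = slide σ n j ∘ₗ sig σ n (k + 1) := by
  induction j, hkj using Nat.le_induction with
  | base =>
    rw [slide_succ (by omega), slide_succ (by omega), ← comp_assoc, ← comp_assoc,
      sig_comp_slide_comm (by omega)]
    simp only [comp_assoc]
    rw [← sig_braid hσ hjn]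
  | succ j hj ih =>
    rw [slide_succ (by omega), ← comp_assoc, ih (by omega), comp_assoc,
      sig_comp_sig_comm (by omega), comp_assoc]

theorem idTensor_slide_add_two (n i : ℕ) :
    idTensor (slide σ n (i + 2)) = idTensor (slide σ n (i + 1)) ∘ₗ sig σ (n + 1) (i + 2) := by
  rw [← idTensor_sig, ← idTensor_comp]
  rfl

theorem idTensor_slide_comp_slide (hσ : YangBaxter σ) {n i j : ℕ} (hij : i < j)
    (hjn : j ≤ n + 1) :
    idTensor (slide σ n i) ∘ₗ slide σ (n + 1) j = slide σ (n + 1) j ∘ₗ slide σ (n + 1) i := by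
  match i with
  | 0 | 1 => rw [show slide σ n _ = LinearMap.id from rfl, idTensor_id]; rfl
  | i + 2 =>
    rw [idTensor_slide_add_two, comp_assoc, sig_comp_slide hσ (by omega) hjn, ← comp_assoc,
      idTensor_slide_comp_slide hσ (by omega) hjn, comp_assoc]
    rfl

theorem slide_add_two (n j : ℕ) :
    slide σ (n + 1) (j + 2) = sig σ (n + 1) 1 ∘ₗ idTensor (slide σ n (j + 1)) := by
  induction j with
  | zero => rw [show slide σ n 1 = LinearMap.id from rfl, idTensor_id]; rfl
  | succ j ih => rw [slide_succ (by omega), ih, idTensor_slide_add_two, comp_assoc]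

end Slide

section Face
variable {σ : V ⊗[R] V →ₗ[R] V ⊗[R] V} {ε : V →ₗ[R] R}

theorem eps1_comp_eps1_comp_sig_one
    (hε : ((TensorProduct.lid R R).toLinearMap ∘ₗ TensorProduct.map ε ε) ∘ₗ σ =
      (TensorProduct.lid R R).toLinearMap ∘ₗ TensorProduct.map ε ε) (n : ℕ) :
    (eps1 ε n ∘ₗ eps1 ε (n + 1)) ∘ₗ sig σ (n + 2) 1 = eps1 ε n ∘ₗ eps1 ε (n + 1) :=
  epsLeft_comp_epsLeft_comp_conj_rTensor hε

theorem face_comp_face (hσ : YangBaxter σ)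
    (hε : ((TensorProduct.lid R R).toLinearMap ∘ₗ TensorProduct.map ε ε) ∘ₗ σ =
      (TensorProduct.lid R R).toLinearMap ∘ₗ TensorProduct.map ε ε) {n i j : ℕ}
    (hij : i ≤ j) (hjn : j ≤ n) :
    face σ ε n (i + 1) ∘ₗ face σ ε (n + 1) (j + 2) =
      face σ ε n (j + 1) ∘ₗ face σ ε (n + 1) (i + 1) :=
  calc face σ ε n (i + 1) ∘ₗ face σ ε (n + 1) (j + 2)
      = eps1 ε n ∘ₗ (slide σ (n + 1) (i + 1) ∘ₗ eps1 ε (n + 1)) ∘ₗ slide σ (n + 2) (j + 2) := rfl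
    _ = (eps1 ε n ∘ₗ eps1 ε (n + 1)) ∘ₗ
          (idTensor (slide σ (n + 1) (i + 1)) ∘ₗ slide σ (n + 2) (j + 2)) := by
        rw [← eps1_comp_idTensor]; rfl
    _ = ((eps1 ε n ∘ₗ eps1 ε (n + 1)) ∘ₗ sig σ (n + 2) 1) ∘ₗ
          idTensor (slide σ (n + 1) (j + 1)) ∘ₗ slide σ (n + 2) (i + 1) := by
        rw [idTensor_slide_comp_slide hσ (by omega) (by omega), slide_add_two]; rfl
    _ = eps1 ε n ∘ₗ (eps1 ε (n + 1) ∘ₗ idTensor (slide σ (n + 1) (j + 1))) ∘ₗ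
          slide σ (n + 2) (i + 1) := by
        rw [eps1_comp_eps1_comp_sig_one hε]; rfl
    _ = face σ ε n (j + 1) ∘ₗ face σ ε (n + 1) (i + 1) := by
        rw [eps1_comp_idTensor]; rfl

end Face

/-- for a pre-braided vector space `(V, σ)` and a braided character `ε`
(`(ε ⊗ ε) ∘ σ = ε ⊗ ε`), the maps `d_n = Σ_{i=1}^n (−1)^{i−1} ε₁ ∘ T^σ_{p_{i,n}}`
square to zero: `d_{n−1} ∘ d_n = 0`. -/
theorem braided_differential_squares_to_zero
    (σ : V ⊗[R] V →ₗ[R] V ⊗[R] V) (hσ : YangBaxter σ)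
    (ε : V →ₗ[R] R)
    (hε : ((TensorProduct.lid R R).toLinearMap ∘ₗ TensorProduct.map ε ε) ∘ₗ σ =
          (TensorProduct.lid R R).toLinearMap ∘ₗ TensorProduct.map ε ε) :
    ∀ n : ℕ, dbr σ ε n ∘ₗ dbr σ ε (n+1) = 0 := fun n =>
  alternating_sum_comp_alternating_sum_eq_zero n _ _ fun _ _ hij hjn =>
    face_comp_face hσ hε hij hjn
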